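/- For every real q ≥ 1, the function h : [0,1/2] → ℝ defined by h(x) := x^{q−1}(1/2−x)^{q−1}(2x−1/2) satisfies h(1/2−x) = −h(x) for all x ∈ [0,1/2] and ∫_0^{1/2} h(x) dx = 0; moreover, for every y ∈ [0,1/2], ∫_0^y h(x) dx ≤ 0, with strict inequality when y ∈ (0,1/2). -/
import Mathlib


open MeasureTheory

noncomputable section

/-- `h(x) = x^{q-1} (1/2-x)^{q-1} (2x - 1/2)`. -/
def hfun (q : ℝ) (x : ℝ) : ℝ := x ^ (q - 1) * (1/2 - x) ^ (q - 1) * (2*x - 1/2)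

lemma hfun_antisym (q x : ℝ) : hfun q (1/2 - x) = -hfun q x := by
  have h1 : (1:ℝ)/2 - (1/2 - x) = x := by ring
  simp only [hfun, h1]
  ring

lemma hfun_continuous (q : ℝ) (hq : 1 ≤ q) : Continuous (hfun q) := by
  have h1 : Continuous fun x : ℝ => x ^ (q - 1) := by
    apply continuous_iff_continuousAt.2
    intro x
    exact Real.continuousAt_rpow_const x (q - 1) (Or.inr (by linarith))
  have h2 : Continuous fun x : ℝ => (1/2 - x) ^ (q - 1) :=
    h1.comp (by continuity)
  exact ((h1.mul h2).mul (by continuity))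

lemma hfun_intble (q : ℝ) (hq : 1 ≤ q) (a b : ℝ) :
    IntervalIntegrable (hfun q) volume a b :=
  (hfun_continuous q hq).intervalIntegrable a b

lemma hfun_nonpos (q : ℝ) (hq : 1 ≤ q) {x : ℝ} (h0 : 0 ≤ x) (h1 : x ≤ 1/4) :
    hfun q x ≤ 0 := by
  apply mul_nonpos_of_nonneg_of_nonpos
  · exact mul_nonneg (Real.rpow_nonneg h0 _) (Real.rpow_nonneg (by linarith) _)
  · linarith

lemma hfun_neg (q : ℝ) (hq : 1 ≤ q) {x : ℝ} (h0 : 0 < x) (h1 : x < 1/4) :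
    hfun q x < 0 := by
  apply mul_neg_of_pos_of_neg
  · exact mul_pos (Real.rpow_pos_of_pos h0 _) (Real.rpow_pos_of_pos (by linarith) _)
  · linarith

lemma hfun_nonneg (q : ℝ) (hq : 1 ≤ q) {x : ℝ} (h0 : 1/4 ≤ x) (h1 : x ≤ 1/2) :
    0 ≤ hfun q x := by
  apply mul_nonneg
  · exact mul_nonneg (Real.rpow_nonneg (by linarith) _) (Real.rpow_nonneg (by linarith) _)
  · linarith

lemma hfun_pos (q : ℝ) (hq : 1 ≤ q) {x : ℝ} (h0 : 1/4 < x) (h1 : x < 1/2) :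
    0 < hfun q x := by
  apply mul_pos
  · exact mul_pos (Real.rpow_pos_of_pos (by linarith) _) (Real.rpow_pos_of_pos (by linarith) _)
  · linarith

lemma hfun_integral_half (q : ℝ) (hq : 1 ≤ q) :
    (∫ x in (0:ℝ)..(1/2), hfun q x) = 0 := by
  have key : (∫ x in (0:ℝ)..(1/2), hfun q (1/2 - x)) = ∫ x in (0:ℝ)..(1/2), hfun q x := by
    rw [intervalIntegral.integral_comp_sub_left (hfun q) (1/2)]
    norm_num
  have : (∫ x in (0:ℝ)..(1/2), hfun q (1/2 - x)) = -∫ x in (0:ℝ)..(1/2), hfun q x := by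
    simp only [hfun_antisym]
    exact intervalIntegral.integral_neg
  linarith [key, this]

/-- for every real `q ≥ 1`, `h` satisfies `h(1/2 - x) = -h(x)` on
`[0,1/2]` and `∫_0^{1/2} h = 0`; moreover `∫_0^y h ≤ 0` for every `y ∈ [0,1/2]`, with
strict inequality when `y ∈ (0,1/2)`. -/
theorem hfun_antisymmetry_and_integral (q : ℝ) (hq : 1 ≤ q) :
    (∀ x ∈ Set.Icc (0:ℝ) (1/2), hfun q (1/2 - x) = -hfun q x) ∧
    (∫ x in Set.Icc (0:ℝ) (1/2), hfun q x) = 0 ∧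
    (∀ y ∈ Set.Icc (0:ℝ) (1/2),
      (∫ x in Set.Icc (0:ℝ) y, hfun q x) ≤ 0 ∧
      (y ∈ Set.Ioo (0:ℝ) (1/2) → (∫ x in Set.Icc (0:ℝ) y, hfun q x) < 0)) := by
  have icc_eq : ∀ y : ℝ, 0 ≤ y →
      (∫ x in Set.Icc (0:ℝ) y, hfun q x) = ∫ x in (0:ℝ)..y, hfun q x := by
    intro y hy
    rw [integral_Icc_eq_integral_Ioc, intervalIntegral.integral_of_le hy]
  refine ⟨fun x _ => hfun_antisym q x, ?_, ?_⟩
  · rw [icc_eq (1/2) (by norm_num)]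
    exact hfun_integral_half q hq
  · intro y hy
    obtain ⟨hy0, hy2⟩ := hy
    rw [icc_eq y hy0]
    have split : ∀ z : ℝ, 0 ≤ z → z ≤ 1/2 →
        (∫ x in (0:ℝ)..z, hfun q x) = -∫ x in z..(1/2), hfun q x := by
      intro z hz0 hz2
      have := intervalIntegral.integral_add_adjacent_intervals
        (hfun_intble q hq 0 z) (hfun_intble q hq z (1/2))
      rw [hfun_integral_half q hq] at this
      linarith
    constructor
    · rcases le_or_gt y (1/4) with h | h
      · rw [intervalIntegral.integral_of_le hy0]
        apply integral_nonpos_of_ae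
        filter_upwards [ae_restrict_mem measurableSet_Ioc] with x hx
        exact hfun_nonpos q hq hx.1.le (le_trans hx.2 h)
      · rw [split y hy0 hy2, neg_nonpos]
        rw [intervalIntegral.integral_of_le hy2]
        apply integral_nonneg_of_ae
        filter_upwards [ae_restrict_mem measurableSet_Ioc] with x hx
        exact hfun_nonneg q hq (by linarith [hx.1]) hx.2
    · rintro ⟨hy0', hy2'⟩
      rcases le_or_gt y (1/4) with h | h
      · have : 0 < ∫ x in (0:ℝ)..y, -hfun q x := by
          apply intervalIntegral.intervalIntegral_pos_of_pos_on
            ((hfun_intble q hq 0 y).neg)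
          · intro x hx
            exact neg_pos.mpr (hfun_neg q hq hx.1 (lt_of_lt_of_le hx.2 h))
          · exact hy0'
        rw [intervalIntegral.integral_neg] at this
        linarith
      · rw [split y hy0 hy2]
        apply neg_neg_of_pos
        apply intervalIntegral.intervalIntegral_pos_of_pos_on (hfun_intble q hq y (1/2))
        · intro x hx
          exact hfun_pos q hq (by linarith [hx.1]) hx.2
        · exact hy2'

end
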